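/- arXiv:2504.01486 — 7 statements merged into one kernel-verified Lean document; each statement's English description precedes it below -/
import Mathlib

section
/- Revealing a new item never increases the fraction by which any previously present item is contained in the fractional greedy solution: for every Q ⊆ [n], every j ∈ [n] \ Q, and every k ∈ Q, it holds that x̃_k(Q ∪ {j}) ≤ x̃_k(Q). -/
/-- The fractional greedy solution of the sub-instance on item set `Q`:
since the densities are strictly decreasing in the index, the items of `Q` are
packed greedily in increasing index order (= decreasing density order) until the
capacity `C` is exhausted; the first item that does not fully fit is packed
fractionally, all later items of `Q` get fraction `0`, and items outside `Q` get `0`. -/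
noncomputable def greedySol (n : ℕ) (C : ℝ) (s : Fin n → ℝ) (Q : Finset (Fin n)) (j : Fin n) : ℝ :=
  if j ∈ Q then
    (min C (∑ k ∈ Q.filter (fun k => k ≤ j), s k)
      - min C (∑ k ∈ Q.filter (fun k => k < j), s k)) / s j
  else 0

lemma min_shift_le (C a b t : ℝ) (hba : b ≤ a) (ht : 0 ≤ t) :
    min C (a + t) - min C (b + t) ≤ min C a - min C b := by
  simp only [min_def]
  split_ifs <;> linarith

/-- Revealing a new item never increases the fraction by which any
previously present item is contained in the fractional greedy solution: for every
`Q ⊆ [n]`, every `j ∉ Q` and every `k ∈ Q`, `x̃_k(Q ∪ {j}) ≤ x̃_k(Q)`. -/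
theorem greedy_fraction_monotone
    (n : ℕ) (C : ℝ) (hC : 0 < C)
    (v s : Fin n → ℝ)
    (hv : ∀ j, 0 < v j) (hs : ∀ j, 0 < s j ∧ s j ≤ C)
    (hd : ∀ j k : Fin n, j < k → v k / s k < v j / s j)
    (Q : Finset (Fin n)) (j : Fin n) (hj : j ∉ Q) (k : Fin n) (hk : k ∈ Q) :
    greedySol n C s (insert j Q) k ≤ greedySol n C s Q k := by
  have hjk : j ≠ k := fun h => hj (h ▸ hk)
  simp only [greedySol, if_pos hk, if_pos (Finset.mem_insert_of_mem hk)]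
  rcases lt_or_gt_of_ne hjk with hlt | hgt
  · rw [Finset.filter_insert, Finset.filter_insert, if_pos hlt.le, if_pos hlt,
      Finset.sum_insert (by simp [hj]), Finset.sum_insert (by simp [hj])]
    apply div_le_div_of_nonneg_right (c := s k) ?_ (hs k).1.le
    calc min C (s j + ∑ i ∈ Q.filter (fun i => i ≤ k), s i)
          - min C (s j + ∑ i ∈ Q.filter (fun i => i < k), s i)
        = min C ((∑ i ∈ Q.filter (fun i => i ≤ k), s i) + s j)
          - min C ((∑ i ∈ Q.filter (fun i => i < k), s i) + s j) := by ring_nf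
      _ ≤ _ := by
          apply min_shift_le
          · exact Finset.sum_le_sum_of_subset_of_nonneg
              (by intro i hi; simp only [Finset.mem_filter] at hi ⊢; exact ⟨hi.1, hi.2.le⟩)
              (fun i _ _ => (hs i).1.le)
          · exact (hs j).1.le
  · rw [Finset.filter_insert, Finset.filter_insert, if_neg (by exact fun h => absurd h (not_le.mpr hgt)),
      if_neg (by exact fun h => absurd h (not_lt.mpr hgt.le))]
end

section
/- For every permutation π of [n], every sample size t ∈ {1,…,n−1}, and every round ℓ > t, the fraction assigned by Algorithm FractionalKnapsack satisfies x_{π(ℓ)} ∈ [0,1]. -/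
/-- `Qset π ℓ` is the set `Q_ℓ` of items revealed in the first `ℓ` rounds
(rounds are indexed `0,…,n−1`, so round `ℓ₀ : Fin n` is round `ℓ₀+1` in 1-based counting). -/
def Qset (n : ℕ) (π : Equiv.Perm (Fin n)) (ℓ : ℕ) : Finset (Fin n) :=
  (Finset.univ.filter (fun k : Fin n => (k : ℕ) < ℓ)).image π

/-- The output of Algorithm `FractionalKnapsack` with sample size `t`:
`x_{π(ℓ)} = 0` for the sample rounds `ℓ ≤ t` (0-based: rounds `< t`) and, for a later
round `ℓ`, `x_{π(ℓ)} = x̃_{π(ℓ)}(Q_ℓ) − (1/s_{π(ℓ)}) Σ_{k=t+1}^{ℓ−1} s_{π(k)} (x̃_{π(k)}(Q_{ℓ−1}) − x̃_{π(k)}(Q_ℓ))`. -/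
noncomputable def algFK (n : ℕ) (C : ℝ) (s : Fin n → ℝ) (π : Equiv.Perm (Fin n)) (t : ℕ)
    (j : Fin n) : ℝ :=
  if (π.symm j : ℕ) < t then 0 else
    greedySol n C s (Qset n π ((π.symm j : ℕ) + 1)) j
      - (∑ k ∈ Finset.univ.filter
            (fun k : Fin n => t ≤ (k : ℕ) ∧ (k : ℕ) < (π.symm j : ℕ)),
          s (π k) * (greedySol n C s (Qset n π (π.symm j : ℕ)) (π k)
            - greedySol n C s (Qset n π ((π.symm j : ℕ) + 1)) (π k))) / s j


lemma min_conc {C a c d : ℝ} (hd : 0 ≤ d) (hc : 0 ≤ c) :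
    min C (a + d + c) - min C (a + d) ≤ min C (a + c) - min C a := by
  simp only [min_def]; split_ifs <;> linarith

lemma filter_le_split {n : ℕ} (Q : Finset (Fin n)) (j : Fin n) (hj : j ∈ Q) :
    Q.filter (fun k => k ≤ j) = insert j (Q.filter (fun k => k < j)) := by
  ext k
  simp only [Finset.mem_filter, Finset.mem_insert]
  constructor
  · rintro ⟨hkQ, hk⟩
    rcases hk.lt_or_eq with h | h
    · exact Or.inr ⟨hkQ, h⟩
    · exact Or.inl h
  · rintro (rfl | ⟨hkQ, hk⟩)
    · exact ⟨hj, le_rfl⟩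
    · exact ⟨hkQ, hk.le⟩

lemma sum_filter_le_split {n : ℕ} (Q : Finset (Fin n)) (s : Fin n → ℝ) (j : Fin n) (hj : j ∈ Q) :
    ∑ k ∈ Q.filter (fun k => k ≤ j), s k = s j + ∑ k ∈ Q.filter (fun k => k < j), s k := by
  rw [filter_le_split Q j hj, Finset.sum_insert (by simp)]

lemma greedySol_nonneg (n : ℕ) (C : ℝ) (s : Fin n → ℝ) (Q : Finset (Fin n)) (j : Fin n)
    (hsj : 0 < s j) : 0 ≤ greedySol n C s Q j := by
  unfold greedySol
  split
  · next hj =>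
    apply div_nonneg _ hsj.le
    rw [sum_filter_le_split Q s j hj]
    have := min_le_min (le_refl C)
      (by linarith : (∑ k ∈ Q.filter (fun k => k < j), s k) ≤ s j + ∑ k ∈ Q.filter (fun k => k < j), s k)
    linarith
  · exact le_rfl

lemma greedySol_le_one (n : ℕ) (C : ℝ) (s : Fin n → ℝ) (Q : Finset (Fin n)) (j : Fin n)
    (hsj : 0 < s j) : greedySol n C s Q j ≤ 1 := by
  unfold greedySol
  split
  · next hj =>
    rw [div_le_one hsj, sum_filter_le_split Q s j hj]
    set A := ∑ k ∈ Q.filter (fun k => k < j), s k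
    have : min C (s j + A) ≤ min C A + s j := by
      simp only [min_def]; split_ifs <;> linarith
    linarith
  · norm_num

lemma greedySol_insert_le (n : ℕ) (C : ℝ) (s : Fin n → ℝ) (Q : Finset (Fin n)) (j k : Fin n)
    (hj : j ∉ Q) (hk : k ∈ Q) (hsj : 0 ≤ s j) (hsk : 0 < s k) :
    greedySol n C s (insert j Q) k ≤ greedySol n C s Q k := by
  have hkins : k ∈ insert j Q := Finset.mem_insert_of_mem hk
  unfold greedySol
  rw [if_pos hkins, if_pos hk]
  rcases le_or_gt j k with hjk | hjk
  · have hjk' : j < k := hjk.lt_of_ne (by rintro rfl; exact hj hk)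
    have h1 : (insert j Q).filter (fun x => x ≤ k) = insert j (Q.filter (fun x => x ≤ k)) := by
      rw [Finset.filter_insert, if_pos hjk]
    have h2 : (insert j Q).filter (fun x => x < k) = insert j (Q.filter (fun x => x < k)) := by
      rw [Finset.filter_insert, if_pos hjk']
    rw [h1, h2, Finset.sum_insert (fun h => hj (Finset.mem_filter.mp h).1),
        Finset.sum_insert (fun h => hj (Finset.mem_filter.mp h).1)]
    have hnum : min C (s j + ∑ x ∈ Q.filter (fun x => x ≤ k), s x)
          - min C (s j + ∑ x ∈ Q.filter (fun x => x < k), s x)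
        ≤ min C (∑ x ∈ Q.filter (fun x => x ≤ k), s x)
          - min C (∑ x ∈ Q.filter (fun x => x < k), s x) := by
      rw [sum_filter_le_split Q s k hk]
      set A := ∑ x ∈ Q.filter (fun x => x < k), s x
      rw [show s j + (s k + A) = A + s j + s k by ring, show s j + A = A + s j by ring,
          show s k + A = A + s k by ring]
      exact min_conc hsj hsk.le
    exact div_le_div_of_nonneg_right hnum hsk.le
  · have h1 : (insert j Q).filter (fun x => x ≤ k) = Q.filter (fun x => x ≤ k) := by
      rw [Finset.filter_insert, if_neg (not_le.mpr hjk)]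
    have h2 : (insert j Q).filter (fun x => x < k) = Q.filter (fun x => x < k) := by
      rw [Finset.filter_insert, if_neg (not_lt.mpr hjk.le)]
    rw [h1, h2]

lemma sum_mul_greedySol (n : ℕ) (C : ℝ) (s : Fin n → ℝ) (hC : 0 ≤ C) (hs : ∀ k, 0 < s k)
    (Q : Finset (Fin n)) :
    ∑ k ∈ Q, s k * greedySol n C s Q k = min C (∑ k ∈ Q, s k) := by
  induction Q using Finset.strongInduction with
  | _ Q ih =>
    rcases Q.eq_empty_or_nonempty with rfl | hne
    · simp [min_eq_right hC]
    · set m := Q.max' hne with hm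
      have hmQ : m ∈ Q := Q.max'_mem hne
      have hfle : Q.filter (fun k => k ≤ m) = Q :=
        Finset.filter_true_of_mem (fun k hk => Q.le_max' k hk)
      have hflt : Q.filter (fun k => k < m) = Q.erase m := by
        ext k; simp only [Finset.mem_filter, Finset.mem_erase]
        constructor
        · rintro ⟨h1, h2⟩; exact ⟨h2.ne, h1⟩
        · rintro ⟨h1, h2⟩; exact ⟨h2, (Q.le_max' k h2).lt_of_ne h1⟩
      have hgm : ∀ k ∈ Q.erase m, greedySol n C s Q k = greedySol n C s (Q.erase m) k := by
        intro k hk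
        obtain ⟨hkm, hkQ⟩ := Finset.mem_erase.mp hk
        have hklt : k < m := (Q.le_max' k hkQ).lt_of_ne hkm
        have e1 : Q.filter (fun x => x ≤ k) = (Q.erase m).filter (fun x => x ≤ k) := by
          ext x; simp only [Finset.mem_filter, Finset.mem_erase]
          constructor
          · rintro ⟨h1, h2⟩
            exact ⟨⟨fun h => absurd (h ▸ h2) (not_le.mpr hklt), h1⟩, h2⟩
          · rintro ⟨⟨_, h1⟩, h2⟩; exact ⟨h1, h2⟩
        have e2 : Q.filter (fun x => x < k) = (Q.erase m).filter (fun x => x < k) := by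
          ext x; simp only [Finset.mem_filter, Finset.mem_erase]
          constructor
          · rintro ⟨h1, h2⟩
            exact ⟨⟨fun h => absurd (h ▸ h2) (not_lt.mpr hklt.le), h1⟩, h2⟩
          · rintro ⟨⟨_, h1⟩, h2⟩; exact ⟨h1, h2⟩
        unfold greedySol
        rw [if_pos hkQ, if_pos hk, e1, e2]
      rw [← Finset.add_sum_erase _ _ hmQ]
      have hterm : s m * greedySol n C s Q m
          = min C (∑ k ∈ Q, s k) - min C (∑ k ∈ Q.erase m, s k) := by
        unfold greedySol
        rw [if_pos hmQ, hfle, hflt, mul_comm, div_mul_cancel₀ _ (ne_of_gt (hs m))]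
      have hsum : ∑ k ∈ Q.erase m, s k * greedySol n C s Q k
          = min C (∑ k ∈ Q.erase m, s k) := by
        rw [Finset.sum_congr rfl (fun k hk => by rw [hgm k hk])]
        exact ih (Q.erase m) (Finset.erase_ssubset hmQ)
      rw [hterm, hsum]; ring

/-- For every permutation `π` of `[n]`, every sample size
`t ∈ {1,…,n−1}`, and every round `ℓ > t`, the fraction assigned by Algorithm
`FractionalKnapsack` satisfies `x_{π(ℓ)} ∈ [0,1]`. -/
theorem algFK_fraction_in_unit_interval
    (n : ℕ) (C : ℝ) (hC : 0 < C)
    (v s : Fin n → ℝ)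
    (hv : ∀ j, 0 < v j) (hs : ∀ j, 0 < s j ∧ s j ≤ C)
    (hd : ∀ j k : Fin n, j < k → v k / s k < v j / s j)
    (π : Equiv.Perm (Fin n)) (t : ℕ) (ht1 : 1 ≤ t) (ht2 : t < n)
    (ℓ : Fin n) (hℓ : t ≤ (ℓ : ℕ)) :
    0 ≤ algFK n C s π t (π ℓ) ∧ algFK n C s π t (π ℓ) ≤ 1 := by
  have hsπ : ∀ j, 0 < s j := fun j => (hs j).1
  simp only [algFK, Equiv.symm_apply_apply]
  rw [if_neg (by omega : ¬ (ℓ : ℕ) < t)]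
  -- basic facts about Qset
  have hfilter : (Finset.univ.filter (fun k : Fin n => (k : ℕ) < (ℓ : ℕ) + 1))
      = insert ℓ (Finset.univ.filter (fun k : Fin n => (k : ℕ) < (ℓ : ℕ))) := by
    ext k
    simp only [Finset.mem_filter, Finset.mem_insert, Finset.mem_univ, true_and]
    constructor
    · intro h
      rcases Nat.lt_succ_iff_lt_or_eq.mp h with h | h
      · exact Or.inr h
      · exact Or.inl (Fin.ext h)
    · rintro (rfl | h) <;> omega
  have hins : Qset n π ((ℓ : ℕ) + 1) = insert (π ℓ) (Qset n π (ℓ : ℕ)) := by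
    rw [Qset, hfilter, Finset.image_insert]; rfl
  have hnot : π ℓ ∉ Qset n π (ℓ : ℕ) := by
    simp only [Qset, Finset.mem_image, Finset.mem_filter, Finset.mem_univ, true_and]
    rintro ⟨k, hk, hπ⟩
    have hkl : k = ℓ := π.injective hπ
    subst hkl
    exact lt_irrefl _ hk
  have hmemQ : ∀ k : Fin n, (k : ℕ) < (ℓ : ℕ) → π k ∈ Qset n π (ℓ : ℕ) := by
    intro k hk
    exact Finset.mem_image_of_mem π (Finset.mem_filter.mpr ⟨Finset.mem_univ k, hk⟩)
  -- each summand is nonnegative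
  have hterm : ∀ k : Fin n, (k : ℕ) < (ℓ : ℕ) →
      0 ≤ s (π k) * (greedySol n C s (Qset n π (ℓ : ℕ)) (π k)
        - greedySol n C s (Qset n π ((ℓ : ℕ) + 1)) (π k)) := by
    intro k hk
    apply mul_nonneg (hsπ _).le
    rw [hins]
    have := greedySol_insert_le n C s (Qset n π (ℓ : ℕ)) (π ℓ) (π k) hnot
      (hmemQ k hk) (hsπ _).le (hsπ _)
    linarith
  set Sum := ∑ k ∈ Finset.univ.filter
      (fun k : Fin n => t ≤ (k : ℕ) ∧ (k : ℕ) < (ℓ : ℕ)),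
    s (π k) * (greedySol n C s (Qset n π (ℓ : ℕ)) (π k)
      - greedySol n C s (Qset n π ((ℓ : ℕ) + 1)) (π k)) with hSum
  have hSum0 : 0 ≤ Sum := by
    apply Finset.sum_nonneg
    intro k hk
    exact hterm k (Finset.mem_filter.mp hk).2.2
  have hg0 : 0 ≤ greedySol n C s (Qset n π ((ℓ : ℕ) + 1)) (π ℓ) :=
    greedySol_nonneg n C s _ _ (hsπ _)
  have hg1 : greedySol n C s (Qset n π ((ℓ : ℕ) + 1)) (π ℓ) ≤ 1 :=
    greedySol_le_one n C s _ _ (hsπ _)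
  constructor
  · -- lower bound
    have hBig : Sum ≤ ∑ k ∈ Finset.univ.filter (fun k : Fin n => (k : ℕ) < (ℓ : ℕ)),
        s (π k) * (greedySol n C s (Qset n π (ℓ : ℕ)) (π k)
          - greedySol n C s (Qset n π ((ℓ : ℕ) + 1)) (π k)) := by
      apply Finset.sum_le_sum_of_subset_of_nonneg
      · intro k hk
        simp only [Finset.mem_filter, Finset.mem_univ, true_and] at hk ⊢
        exact hk.2
      · intro k hk _
        exact hterm k (by simpa using (Finset.mem_filter.mp hk).2)
    have himg : ∑ k ∈ Finset.univ.filter (fun k : Fin n => (k : ℕ) < (ℓ : ℕ)),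
        s (π k) * (greedySol n C s (Qset n π (ℓ : ℕ)) (π k)
          - greedySol n C s (Qset n π ((ℓ : ℕ) + 1)) (π k))
        = ∑ j ∈ Qset n π (ℓ : ℕ),
        s j * (greedySol n C s (Qset n π (ℓ : ℕ)) j
          - greedySol n C s (Qset n π ((ℓ : ℕ) + 1)) j) := by
      rw [Qset, Finset.sum_image (fun a _ b _ h => π.injective h)]
    have hQ : ∑ j ∈ Qset n π (ℓ : ℕ), s j * greedySol n C s (Qset n π (ℓ : ℕ)) j
        = min C (∑ j ∈ Qset n π (ℓ : ℕ), s j) :=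
      sum_mul_greedySol n C s hC.le hsπ _
    have hQ' : ∑ j ∈ Qset n π ((ℓ : ℕ) + 1), s j * greedySol n C s (Qset n π ((ℓ : ℕ) + 1)) j
        = min C (∑ j ∈ Qset n π ((ℓ : ℕ) + 1), s j) :=
      sum_mul_greedySol n C s hC.le hsπ _
    have hsplit : ∑ j ∈ Qset n π ((ℓ : ℕ) + 1), s j * greedySol n C s (Qset n π ((ℓ : ℕ) + 1)) j
        = s (π ℓ) * greedySol n C s (Qset n π ((ℓ : ℕ) + 1)) (π ℓ)
          + ∑ j ∈ Qset n π (ℓ : ℕ), s j * greedySol n C s (Qset n π ((ℓ : ℕ) + 1)) j := by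
      rw [hins, Finset.sum_insert hnot]
    have hScap : ∑ j ∈ Qset n π ((ℓ : ℕ) + 1), s j = s (π ℓ) + ∑ j ∈ Qset n π (ℓ : ℕ), s j := by
      rw [hins, Finset.sum_insert hnot]
    have hmin : min C (∑ j ∈ Qset n π (ℓ : ℕ), s j)
        ≤ min C (∑ j ∈ Qset n π ((ℓ : ℕ) + 1), s j) := by
      apply min_le_min le_rfl
      rw [hScap]
      have := (hsπ (π ℓ)).le
      linarith
    have hkey : Sum ≤ s (π ℓ) * greedySol n C s (Qset n π ((ℓ : ℕ) + 1)) (π ℓ) := by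
      calc Sum ≤ _ := hBig
        _ = ∑ j ∈ Qset n π (ℓ : ℕ), s j * greedySol n C s (Qset n π (ℓ : ℕ)) j
            - ∑ j ∈ Qset n π (ℓ : ℕ), s j * greedySol n C s (Qset n π ((ℓ : ℕ) + 1)) j := by
          rw [himg, ← Finset.sum_sub_distrib]
          exact Finset.sum_congr rfl (fun j _ => by ring)
        _ ≤ s (π ℓ) * greedySol n C s (Qset n π ((ℓ : ℕ) + 1)) (π ℓ) := by
          have h1 : ∑ j ∈ Qset n π (ℓ : ℕ), s j * greedySol n C s (Qset n π ((ℓ : ℕ) + 1)) j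
              = min C (∑ j ∈ Qset n π ((ℓ : ℕ) + 1), s j)
                - s (π ℓ) * greedySol n C s (Qset n π ((ℓ : ℕ) + 1)) (π ℓ) := by
            rw [← hQ']; linarith [hsplit]
          rw [hQ, h1]
          linarith [hmin]
    have : Sum / s (π ℓ) ≤ greedySol n C s (Qset n π ((ℓ : ℕ) + 1)) (π ℓ) := by
      rw [div_le_iff₀ (hsπ (π ℓ))]
      linarith [hkey]
    linarith
  · have : 0 ≤ Sum / s (π ℓ) := div_nonneg hSum0 (hsπ _).le
    linarith
end

section
/- For every permutation π of [n] and every sample size t ∈ {1,…,n−1}, the output x of Algorithm FractionalKnapsack is a feasible fractional knapsack solution: Σ_{ℓ=1}^n s_{π(ℓ)} x_{π(ℓ)} = Σ_{ℓ=t+1}^n s_{π(ℓ)} x̃_{π(ℓ)}([n]) ≤ C, where x̃([n]) is the fractional greedy solution of all n items. -/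
/-- For every permutation `π` of `[n]` and every sample size
`t ∈ {1,…,n−1}`, the output `x` of Algorithm `FractionalKnapsack` is a feasible
fractional knapsack solution:
`Σ_{ℓ=1}^n s_{π(ℓ)} x_{π(ℓ)} = Σ_{ℓ=t+1}^n s_{π(ℓ)} x̃_{π(ℓ)}([n]) ≤ C`,
where `x̃([n])` is the fractional greedy solution of all `n` items. -/
theorem algFK_feasible
    (n : ℕ) (C : ℝ) (hC : 0 < C)
    (v s : Fin n → ℝ)
    (hv : ∀ j, 0 < v j) (hs : ∀ j, 0 < s j ∧ s j ≤ C)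
    (hd : ∀ j k : Fin n, j < k → v k / s k < v j / s j)
    (π : Equiv.Perm (Fin n)) (t : ℕ) (ht1 : 1 ≤ t) (ht2 : t < n) :
    (∑ j, s j * algFK n C s π t j
        = ∑ ℓ ∈ Finset.univ.filter (fun ℓ : Fin n => t ≤ (ℓ : ℕ)),
            s (π ℓ) * greedySol n C s Finset.univ (π ℓ)) ∧
    (∑ j, s j * algFK n C s π t j ≤ C) := by
  classical
  have hsne : ∀ j : Fin n, s j ≠ 0 := fun j => ne_of_gt (hs j).1
  -- The telescoping quantity
  set T : ℕ → ℝ := fun m =>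
    ∑ k ∈ Finset.univ.filter (fun k : Fin n => t ≤ (k : ℕ) ∧ (k : ℕ) < m),
      s (π k) * greedySol n C s (Qset n π m) (π k) with hTdef
  have hterm : ∀ ℓ : Fin n,
      s (π ℓ) * algFK n C s π t (π ℓ) = T ((ℓ : ℕ) + 1) - T (ℓ : ℕ) := by
    intro ℓ
    by_cases hℓ : (ℓ : ℕ) < t
    · have hz : ∀ m : ℕ, m ≤ t → T m = 0 := by
        intro m hm
        rw [hTdef]
        apply Finset.sum_eq_zero
        intro k hk
        simp only [Finset.mem_filter] at hk
        omega
      rw [hz _ (by omega), hz _ hℓ.le]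
      simp [algFK, hℓ]
    · push_neg at hℓ
      have hins : Finset.univ.filter (fun k : Fin n => t ≤ (k : ℕ) ∧ (k : ℕ) < (ℓ : ℕ) + 1)
          = insert ℓ (Finset.univ.filter (fun k : Fin n => t ≤ (k : ℕ) ∧ (k : ℕ) < (ℓ : ℕ))) := by
        ext k
        simp only [Finset.mem_insert, Finset.mem_filter, Finset.mem_univ, true_and]
        constructor
        · rintro ⟨h1, h2⟩
          rcases eq_or_ne k ℓ with h | h
          · exact Or.inl h
          · exact Or.inr ⟨h1, by
              have : (k : ℕ) ≠ (ℓ : ℕ) := fun hc => h (Fin.ext hc)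
              omega⟩
        · rintro (h | ⟨h1, h2⟩)
          · subst h; exact ⟨hℓ, by omega⟩
          · exact ⟨h1, by omega⟩
      have hnotmem : ℓ ∉ Finset.univ.filter (fun k : Fin n => t ≤ (k : ℕ) ∧ (k : ℕ) < (ℓ : ℕ)) := by
        simp
      rw [hTdef]
      simp only
      rw [hins, Finset.sum_insert hnotmem]
      simp only [algFK, Equiv.symm_apply_apply, not_lt.mpr hℓ, if_false]
      rw [mul_sub, mul_div_cancel₀ _ (hsne (π ℓ))]
      simp only [mul_sub, Finset.sum_sub_distrib]
      ring
  have key : ∑ j, s j * algFK n C s π t j = T n := by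
    rw [← Equiv.sum_comp π (fun j => s j * algFK n C s π t j)]
    rw [Finset.sum_congr rfl (fun ℓ _ => hterm ℓ)]
    rw [Fin.sum_univ_eq_sum_range (fun m => T (m + 1) - T m), Finset.sum_range_sub]
    have hT0 : T 0 = 0 := by
      rw [hTdef]
      apply Finset.sum_eq_zero
      intro k hk
      simp only [Finset.mem_filter] at hk
      omega
    rw [hT0, sub_zero]
  have hQn : Qset n π n = Finset.univ := by
    unfold Qset
    have : Finset.univ.filter (fun k : Fin n => (k : ℕ) < n) = Finset.univ := by
      apply Finset.filter_true_of_mem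
      intro k _
      exact k.isLt
    rw [this]
    exact Finset.image_univ_equiv π
  have hTn : T n = ∑ ℓ ∈ Finset.univ.filter (fun ℓ : Fin n => t ≤ (ℓ : ℕ)),
      s (π ℓ) * greedySol n C s Finset.univ (π ℓ) := by
    rw [hTdef]
    simp only [hQn]
    apply Finset.sum_congr
    · ext k
      simp only [Finset.mem_filter, Finset.mem_univ, true_and]
      have := k.isLt
      omega
    · intro k _; rfl
  refine ⟨key.trans hTn, ?_⟩
  rw [key, hTn]
  -- nonnegativity of each term
  have hnn : ∀ j : Fin n, 0 ≤ s j * greedySol n C s Finset.univ j := by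
    intro j
    apply mul_nonneg (hs j).1.le
    unfold greedySol
    rw [if_pos (Finset.mem_univ j)]
    apply div_nonneg _ (hs j).1.le
    rw [sub_nonneg]
    apply min_le_min le_rfl
    apply Finset.sum_le_sum_of_subset_of_nonneg
    · intro k hk
      simp only [Finset.mem_filter, Finset.mem_univ, true_and] at hk ⊢
      exact hk.le
    · intro k _ _
      exact (hs k).1.le
  calc ∑ ℓ ∈ Finset.univ.filter (fun ℓ : Fin n => t ≤ (ℓ : ℕ)),
        s (π ℓ) * greedySol n C s Finset.univ (π ℓ)
      ≤ ∑ ℓ : Fin n, s (π ℓ) * greedySol n C s Finset.univ (π ℓ) := by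
        apply Finset.sum_le_sum_of_subset_of_nonneg (Finset.filter_subset _ _)
        intro k _ _
        exact hnn (π k)
    _ = ∑ j, s j * greedySol n C s Finset.univ j :=
        Equiv.sum_comp π (fun j => s j * greedySol n C s Finset.univ j)
    _ ≤ C := by
        have hterm2 : ∀ j : Fin n, s j * greedySol n C s Finset.univ j
            = min C (∑ k ∈ Finset.univ.filter (fun k : Fin n => (k : ℕ) < (j : ℕ) + 1), s k)
              - min C (∑ k ∈ Finset.univ.filter (fun k : Fin n => (k : ℕ) < (j : ℕ)), s k) := by
          intro j
          have e1 : Finset.univ.filter (fun k : Fin n => k ≤ j)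
              = Finset.univ.filter (fun k : Fin n => (k : ℕ) < (j : ℕ) + 1) := by
            ext k
            simp only [Finset.mem_filter, Finset.mem_univ, true_and, Fin.le_def]
            omega
          have e2 : Finset.univ.filter (fun k : Fin n => k < j)
              = Finset.univ.filter (fun k : Fin n => (k : ℕ) < (j : ℕ)) := by
            ext k
            simp only [Finset.mem_filter, Finset.mem_univ, true_and, Fin.lt_def]
          unfold greedySol
          rw [if_pos (Finset.mem_univ j), e1, e2, mul_div_cancel₀ _ (hsne j)]
        rw [Finset.sum_congr rfl (fun j _ => hterm2 j)]
        rw [Fin.sum_univ_eq_sum_range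
          (fun m => min C (∑ k ∈ Finset.univ.filter (fun k : Fin n => (k : ℕ) < m + 1), s k)
            - min C (∑ k ∈ Finset.univ.filter (fun k : Fin n => (k : ℕ) < m), s k)),
          Finset.sum_range_sub
            (fun m => min C (∑ k ∈ Finset.univ.filter (fun k : Fin n => (k : ℕ) < m), s k))]
        have h0 : (Finset.univ.filter (fun k : Fin n => (k : ℕ) < 0)) = ∅ := by
          apply Finset.filter_false_of_mem
          intro k _
          omega
        rw [h0]
        simp only [Finset.sum_empty]
        rw [min_eq_right hC.le]
        simp [min_le_left]
end

section
/- For every integer n ≥ 1, setting t = ⌊n/2⌋, it holds that 2 − 2t/n + H_t − H_n ≥ 1 − ln 2, where H_k = Σ_{i=1}^k 1/i denotes the k-th harmonic number (H_0 = 0). -/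
/-!
Since `harmonic k - log k` decreases in `k ≥ 1`, `H_{2t} - H_t ≤ log 2`. For even `n = 2t` this
is the claim, as `2t/n ≤ 1`; for odd `n = 2t + 1` the extra term `1/n` of `H_n` is exactly offset
by `2 - 2t/n = 1 + 1/n`.
-/

open Real

lemma harmonic_sub_harmonic_le_log_sub_log {m n : ℕ} (hm : 0 < m) (hmn : m ≤ n) :
    (harmonic n : ℝ) - harmonic m ≤ log n - log m := by
  have h := strictAnti_eulerMascheroniSeq'.antitone hmn
  simp only [eulerMascheroniSeq', hm.ne', (hm.trans_le hmn).ne', if_false] at h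
  linarith

lemma harmonic_two_mul_sub_harmonic_le_log_two (t : ℕ) :
    (harmonic (2 * t) : ℝ) - harmonic t ≤ log 2 := by
  rcases Nat.eq_zero_or_pos t with rfl | ht
  · simpa using log_nonneg one_le_two
  · calc (harmonic (2 * t) : ℝ) - harmonic t
        ≤ log (2 * t : ℕ) - log t := harmonic_sub_harmonic_le_log_sub_log ht (by omega)
      _ = log 2 := by
        push_cast
        rw [log_mul two_ne_zero (by positivity)]
        ring

theorem harmonic_half_bound_general (n : ℕ)
    (H : ℕ → ℝ) (hH : ∀ k, H k = ∑ i ∈ Finset.Icc 1 k, (1 : ℝ) / (i : ℝ)) :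
    2 - 2 * ((n / 2 : ℕ) : ℝ) / (n : ℝ) + H (n / 2) - H n ≥ 1 - Real.log 2 := by
  have hH_harmonic : ∀ k, H k = harmonic k := fun k ↦ by simp [hH, harmonic_eq_sum_Icc]
  obtain ⟨t, rfl | rfl⟩ := Nat.even_or_odd' n
  · have hfrac : 2 * (t : ℝ) / ((2 * t : ℕ) : ℝ) ≤ 1 := by
      push_cast
      exact div_self_le_one _
    rw [show 2 * t / 2 = t by omega, hH_harmonic, hH_harmonic]
    linarith [harmonic_two_mul_sub_harmonic_le_log_two t]
  · have hfrac : 2 - 2 * (t : ℝ) / (2 * t + 1) = 1 + (2 * t + 1 : ℝ)⁻¹ := by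
      field_simp
      ring
    rw [show (2 * t + 1) / 2 = t by omega, hH_harmonic, hH_harmonic, harmonic_succ]
    push_cast
    linarith [harmonic_two_mul_sub_harmonic_le_log_two t]

/-- For every integer `n ≥ 1` and `t = ⌊n/2⌋`,
`2 − 2t/n + H_t − H_n ≥ 1 − ln 2`, where `H_k = Σ_{i=1}^k 1/i` is the `k`-th
harmonic number (`H_0 = 0`). -/
theorem harmonic_half_bound (n : ℕ) (hn : 1 ≤ n)
    (H : ℕ → ℝ) (hH : ∀ k, H k = ∑ i ∈ Finset.Icc 1 k, (1 : ℝ) / (i : ℝ)) :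
    2 - 2 * ((n / 2 : ℕ) : ℝ) / (n : ℝ) + H (n / 2) - H n ≥ 1 - Real.log 2 :=
  harmonic_half_bound_general n H hH
end

section
/- For every ℓ ∈ [n], if Q is a subset of [n] of size ℓ chosen uniformly at random among all such subsets, then the expected optimal fractional assignment value of the items in Q satisfies E[v(x̃(Q))] ≥ (ℓ/n) · v(x*), where x* is an optimal integral feasible assignment of the full instance. -/
/-- The value `v(x) = Σ_i Σ_j v_{i,j} x_{i,j}` of an assignment. -/
def gapVal (m n : ℕ) (v : Fin m → Fin n → ℝ) (x : Fin m → Fin n → ℝ) : ℝ :=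
  ∑ i, ∑ j, v i j * x i j

/-- `x` is a feasible fractional assignment of the items in `Q`: all entries are
nonnegative, every bin respects its capacity, every item is assigned at most once,
and only items of `Q` are assigned. -/
def gapFeasibleOn (m n : ℕ) (C : Fin m → ℝ) (s : Fin m → Fin n → ℝ)
    (x : Fin m → Fin n → ℝ) (Q : Finset (Fin n)) : Prop :=
  (∀ i j, 0 ≤ x i j) ∧
  (∀ i, ∑ j, s i j * x i j ≤ C i) ∧
  (∀ j, ∑ i, x i j ≤ 1) ∧
  (∀ i j, j ∉ Q → x i j = 0)

/-- `x` is an integral (0/1) assignment. -/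
def gapIntegral (m n : ℕ) (x : Fin m → Fin n → ℝ) : Prop :=
  ∀ i j, x i j = 0 ∨ x i j = 1


/-!
Restricting the optimal integral assignment `x*` to the sampled items `Q` gives a feasible
fractional assignment of `Q`, so `v(x̃(Q))` is at least the value of `x*` on `Q`. Every item
lies in a uniformly random `ℓ`-subset with probability `ℓ / n`, so by linearity of expectation
the value of `x*` on `Q` has expectation `(ℓ / n) · v(x*)`.
-/

namespace Finset

variable {α : Type*}

theorem sum_powersetCard_sum_eq_choose_smul {M : Type*} [AddCommMonoid M] [DecidableEq α]
    (s : Finset α) {ℓ : ℕ} (hℓ : 1 ≤ ℓ) (f : α → M) :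
    ∑ Q ∈ s.powersetCard ℓ, ∑ j ∈ Q, f j = (#s - 1).choose (ℓ - 1) • ∑ j ∈ s, f j := by
  rw [sum_comm' (s' := fun j => (s.powersetCard ℓ).filter ({j} ⊆ ·)) (t' := s)]
  · rw [smul_sum]
    refine sum_congr rfl fun j hj => ?_
    rw [sum_const, card_filter_powersetCard_subset _ _ _ (singleton_subset_iff.mpr hj)
      (by rwa [card_singleton]), card_singleton]
  · intro Q j
    simp only [mem_filter, singleton_subset_iff, mem_powersetCard]
    exact ⟨fun ⟨hQ, hj⟩ => ⟨⟨hQ, hj⟩, hQ.1 hj⟩, fun ⟨⟨hQ, hj⟩, _⟩ => ⟨hQ, hj⟩⟩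

theorem sum_powersetCard_sum_div_card {K : Type*} [Field K] [CharZero K] [DecidableEq α]
    (s : Finset α) {ℓ : ℕ} (hℓ1 : 1 ≤ ℓ) (hℓ2 : ℓ ≤ #s) (f : α → K) :
    (∑ Q ∈ s.powersetCard ℓ, ∑ j ∈ Q, f j) / #(s.powersetCard ℓ)
      = ℓ / #s * ∑ j ∈ s, f j := by
  have hchoose : (#s : K) * (#s - 1).choose (ℓ - 1) = (#s).choose ℓ * ℓ := by
    have := Nat.add_one_mul_choose_eq (#s - 1) (ℓ - 1)
    rw [Nat.sub_add_cancel (hℓ1.trans hℓ2), Nat.sub_add_cancel hℓ1] at this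
    exact_mod_cast this
  have hs : (#s : K) ≠ 0 := Nat.cast_ne_zero.mpr (by omega)
  have hN : ((#s).choose ℓ : K) ≠ 0 := Nat.cast_ne_zero.mpr (Nat.choose_pos hℓ2).ne'
  rw [sum_powersetCard_sum_eq_choose_smul s hℓ1, card_powersetCard, nsmul_eq_mul]
  field_simp
  linear_combination (∑ j ∈ s, f j) * hchoose

end Finset

open Finset

section

variable {m n : ℕ}

def gapRestrict (x : Fin m → Fin n → ℝ) (Q : Finset (Fin n)) : Fin m → Fin n → ℝ :=
  fun i j => if j ∈ Q then x i j else 0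

theorem gapFeasibleOn_restrict {C : Fin m → ℝ} {s x : Fin m → Fin n → ℝ} {P : Finset (Fin n)}
    (hs : ∀ i j, 0 ≤ s i j) (hx : gapFeasibleOn m n C s x P) (Q : Finset (Fin n)) :
    gapFeasibleOn m n C s (gapRestrict x Q) Q := by
  obtain ⟨hpos, hcap, hitem, -⟩ := hx
  have hle : ∀ i j, gapRestrict x Q i j ≤ x i j := fun i j => by
    unfold gapRestrict; split_ifs <;> simp [hpos i j]
  refine ⟨fun i j => ?_, fun i => ?_, fun j => ?_, fun i j hj => if_neg hj⟩
  · unfold gapRestrict; split_ifs <;> simp [hpos i j]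
  · exact (sum_le_sum fun j _ => mul_le_mul_of_nonneg_left (hle i j) (hs i j)).trans (hcap i)
  · exact (sum_le_sum fun i _ => hle i j).trans (hitem j)

theorem gapVal_restrict (v x : Fin m → Fin n → ℝ) (Q : Finset (Fin n)) :
    gapVal m n v (gapRestrict x Q) = ∑ j ∈ Q, ∑ i, v i j * x i j := by
  simp only [gapVal, gapRestrict, mul_ite, mul_zero, ← sum_filter, filter_mem_eq_inter,
    univ_inter]
  exact sum_comm

end

theorem gap_sampled_fractional_value_general
    (m n : ℕ) (C : Fin m → ℝ)
    (s v : Fin m → Fin n → ℝ)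
    (hs : ∀ i j, 0 < s i j ∧ s i j ≤ C i)
    (xstar : Fin m → Fin n → ℝ)
    (hstar : gapFeasibleOn m n C s xstar Finset.univ ∧ gapIntegral m n xstar ∧
      (∀ y, gapFeasibleOn m n C s y Finset.univ → gapIntegral m n y →
        gapVal m n v y ≤ gapVal m n v xstar))
    (xt : Finset (Fin n) → Fin m → Fin n → ℝ)
    (hxt : ∀ Q : Finset (Fin n), gapFeasibleOn m n C s (xt Q) Q ∧
      (∀ y, gapFeasibleOn m n C s y Q → gapVal m n v y ≤ gapVal m n v (xt Q)))
    (ℓ : ℕ) (hℓ1 : 1 ≤ ℓ) (hℓ2 : ℓ ≤ n) :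
    (∑ Q ∈ Finset.powersetCard ℓ (Finset.univ : Finset (Fin n)), gapVal m n v (xt Q))
        / ((Finset.powersetCard ℓ (Finset.univ : Finset (Fin n))).card : ℝ)
      ≥ ((ℓ : ℝ) / (n : ℝ)) * gapVal m n v xstar := by
  have hcard : ℓ ≤ #(univ : Finset (Fin n)) := by rwa [card_univ, Fintype.card_fin]
  calc ((ℓ : ℝ) / n) * gapVal m n v xstar
      = (∑ Q ∈ univ.powersetCard ℓ, gapVal m n v (gapRestrict xstar Q))
          / #(univ.powersetCard ℓ) := by
        simp only [gapVal_restrict]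
        rw [sum_powersetCard_sum_div_card _ hℓ1 hcard, card_univ, Fintype.card_fin, gapVal,
          sum_comm]
    _ ≤ _ := by
        gcongr with Q
        exact (hxt Q).2 _ (gapFeasibleOn_restrict (fun i j => (hs i j).1.le) hstar.1 Q)

/-- For every `ℓ ∈ [n]`, if `Q` is a uniformly random subset of `[n]`
of size `ℓ`, then the expected value of an optimal fractional assignment `x̃(Q)` of the
items in `Q` satisfies `E[v(x̃(Q))] ≥ (ℓ/n) · v(x*)`, where `x*` is an optimal integral
feasible assignment of the full instance. -/
theorem gap_sampled_fractional_value
    (m n : ℕ) (C : Fin m → ℝ) (hC : ∀ i, 0 < C i)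
    (s v : Fin m → Fin n → ℝ)
    (hs : ∀ i j, 0 < s i j ∧ s i j ≤ C i) (hv : ∀ i j, 0 < v i j)
    (xstar : Fin m → Fin n → ℝ)
    (hstar : gapFeasibleOn m n C s xstar Finset.univ ∧ gapIntegral m n xstar ∧
      (∀ y, gapFeasibleOn m n C s y Finset.univ → gapIntegral m n y →
        gapVal m n v y ≤ gapVal m n v xstar))
    (xt : Finset (Fin n) → Fin m → Fin n → ℝ)
    (hxt : ∀ Q : Finset (Fin n), gapFeasibleOn m n C s (xt Q) Q ∧
      (∀ y, gapFeasibleOn m n C s y Q → gapVal m n v y ≤ gapVal m n v (xt Q)))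
    (ℓ : ℕ) (hℓ1 : 1 ≤ ℓ) (hℓ2 : ℓ ≤ n) :
    (∑ Q ∈ Finset.powersetCard ℓ (Finset.univ : Finset (Fin n)), gapVal m n v (xt Q))
        / ((Finset.powersetCard ℓ (Finset.univ : Finset (Fin n))).card : ℝ)
      ≥ ((ℓ : ℝ) / (n : ℝ)) * gapVal m n v xstar :=
  gap_sampled_fractional_value_general m n C s v hs xstar hstar xt hxt ℓ hℓ1 hℓ2
end

section
/- Fix t ∈ {0,…,n}, a round ℓ ∈ {t+1,…,n}, a bin i ∈ [m], and any subset Q_{ℓ−1} ⊆ [n] with |Q_{ℓ−1}| = ℓ−1. Let π(1),…,π(ℓ−1) be a uniformly random ordering of Q_{ℓ−1}, write Q_k = {π(1),…,π(k)}, and conditionally on the ordering let R_{t+1},…,R_{ℓ−1} be independent random variables with values in {0,1,…,m} satisfying P(R_k = i') = x̃_{i',π(k)}(Q_k) for i' ∈ [m] and P(R_k = 0) = 1 − Σ_{i'=1}^m x̃_{i',π(k)}(Q_k). Then P(Σ_{k=t+1}^{ℓ−1} s_{i,π(k)} · 1[R_k = i] > C_i) ≤ Σ_{k=t+1}^{ℓ−1}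 1/k. -/
section Aux

lemma marginal_sum {ι α : Type*} [Fintype ι] [DecidableEq ι] [Fintype α]
    (p : ι → α → ℝ) (hp : ∀ i, ∑ a, p i a = 1) (k : ι) (f : α → ℝ) :
    ∑ R : ι → α, (∏ i, p i (R i)) * f (R k) = ∑ a, p k a * f a := by
  have h : ∀ R : ι → α, (∏ i, p i (R i)) * f (R k)
      = ∏ i, (p i (R i) * if i = k then f (R i) else 1) := by
    intro R
    rw [Finset.prod_mul_distrib, Finset.prod_ite_eq' Finset.univ k (fun i => f (R i))]
    simp
  simp_rw [h]
  rw [← Fintype.prod_sum (fun i a => p i a * if i = k then f a else 1)]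
  rw [Finset.prod_eq_single k]
  · simp
  · intro b _ hb; simpa [hb] using hp b
  · simp

lemma card_orderings_le {n d : ℕ} (Q : Finset (Fin n)) (hQ : Q.card = d) :
    (Finset.univ.filter (fun σ : Fin d → Fin n => Function.Injective σ ∧ ∀ k, σ k ∈ Q)).card
      ≤ d.factorial := by
  classical
  rcases Nat.eq_zero_or_pos d with hd | hd
  · subst hd
    have h1 : (Finset.univ.filter
        (fun σ : Fin 0 → Fin n => Function.Injective σ ∧ ∀ k, σ k ∈ Q)).card
        ≤ (Finset.univ : Finset (Fin 0 → Fin n)).card :=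
      Finset.card_le_card (Finset.filter_subset _ _)
    have h2 : (Finset.univ : Finset (Fin 0 → Fin n)).card ≤ 1 := by
      rw [Finset.card_univ]
      exact Fintype.card_le_one_iff.mpr (fun a b => funext (fun k => k.elim0))
    exact (h1.trans h2).trans (by simp [Nat.factorial])
  · have hQne : Q.Nonempty := by rw [← Finset.card_pos, hQ]; exact hd
    obtain ⟨q0, hq0⟩ := hQne
    set f : (Fin d → Fin n) → (Fin d → {x // x ∈ Q}) :=
      fun σ k => if h : σ k ∈ Q then ⟨σ k, h⟩ else ⟨q0, hq0⟩ with hf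
    have hmap : ∀ σ ∈ Finset.univ.filter
        (fun σ : Fin d → Fin n => Function.Injective σ ∧ ∀ k, σ k ∈ Q),
        f σ ∈ Finset.univ.filter (fun τ : Fin d → {x // x ∈ Q} => Function.Injective τ) := by
      intro σ hσ
      rw [Finset.mem_filter] at hσ ⊢
      refine ⟨Finset.mem_univ _, ?_⟩
      intro a b hab
      apply hσ.2.1
      have ha := hσ.2.2 a; have hb := hσ.2.2 b
      simpa [hf, ha, hb] using congrArg Subtype.val hab
    have hinj : Set.InjOn f (Finset.univ.filter
        (fun σ : Fin d → Fin n => Function.Injective σ ∧ ∀ k, σ k ∈ Q)) := by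
      intro σ1 h1 σ2 h2 h12
      simp only [Finset.coe_filter, Set.mem_setOf_eq, Finset.mem_univ, true_and] at h1 h2
      funext k
      have e := congrFun h12 k
      have h1k := h1.2 k; have h2k := h2.2 k
      simpa [hf, h1k, h2k] using congrArg Subtype.val e
    have hle := Finset.card_le_card_of_injOn f hmap hinj
    refine hle.trans ?_
    have hcount : (Finset.univ.filter
        (fun τ : Fin d → {x // x ∈ Q} => Function.Injective τ)).card
        = Fintype.card (Fin d ↪ {x // x ∈ Q}) := by
      rw [← Fintype.card_subtype]
      exact Fintype.card_congr (Equiv.subtypeInjectiveEquivEmbedding _ _)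
    rw [hcount, Fintype.card_embedding_eq, Fintype.card_coe, hQ, Fintype.card_fin,
      Nat.descFactorial_self]

def QkSet {n d : ℕ} (σ : Fin d → Fin n) (k : Fin d) : Finset (Fin n) :=
  (Finset.univ.filter fun p : Fin d => p ≤ k).image σ

lemma filter_swap_image {d : ℕ} (q k : Fin d) (hq : q ≤ k) :
    (Finset.univ.filter fun p : Fin d => p ≤ k).image (Equiv.swap q k)
      = Finset.univ.filter fun p : Fin d => p ≤ k := by
  apply Finset.eq_of_subset_of_card_le
  · intro x hx
    rw [Finset.mem_image] at hx
    obtain ⟨p, hp, rfl⟩ := hx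
    rw [Finset.mem_filter] at hp ⊢
    refine ⟨Finset.mem_univ _, ?_⟩
    rcases eq_or_ne p q with rfl | h1
    · simp [Equiv.swap_apply_left]
    rcases eq_or_ne p k with rfl | h2
    · simp [Equiv.swap_apply_right, hq]
    · rw [Equiv.swap_apply_of_ne_of_ne h1 h2]; exact hp.2
  · rw [Finset.card_image_of_injective _ (Equiv.injective _)]

lemma QkSet_swap {n d : ℕ} (σ : Fin d → Fin n) (q k : Fin d) (hq : q ≤ k) :
    QkSet (σ ∘ Equiv.swap q k) k = QkSet σ k := by
  unfold QkSet
  rw [← Finset.image_image, filter_swap_image q k hq]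

lemma key_bound {m n d : ℕ} (C : Fin m → ℝ) (s : Fin m → Fin n → ℝ)
    (xt : Finset (Fin n) → Fin m → Fin n → ℝ)
    (hx0 : ∀ Q i j, 0 ≤ xt Q i j)
    (hxcap : ∀ Q i, ∑ j, s i j * xt Q i j ≤ C i)
    (hs : ∀ i j, 0 < s i j)
    (Q : Finset (Fin n)) (i : Fin m) (k : Fin d) :
    ((k : ℕ) + 1 : ℝ) * ∑ σ ∈ Finset.univ.filter
        (fun σ : Fin d → Fin n => Function.Injective σ ∧ ∀ k', σ k' ∈ Q),
        s i (σ k) * xt (QkSet σ k) i (σ k)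
      ≤ ((Finset.univ.filter
        (fun σ : Fin d → Fin n => Function.Injective σ ∧ ∀ k', σ k' ∈ Q)).card : ℝ) * C i := by
  classical
  set S := Finset.univ.filter
    (fun σ : Fin d → Fin n => Function.Injective σ ∧ ∀ k', σ k' ∈ Q) with hSdef
  have hswap : ∀ q ∈ Finset.univ.filter (fun p : Fin d => p ≤ k),
      ∑ σ ∈ S, s i (σ k) * xt (QkSet σ k) i (σ k)
        = ∑ σ ∈ S, s i (σ q) * xt (QkSet σ k) i (σ q) := by
    intro q hqmem
    rw [Finset.mem_filter] at hqmem
    have hq : q ≤ k := hqmem.2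
    refine Finset.sum_nbij' (fun σ => σ ∘ Equiv.swap q k) (fun σ => σ ∘ Equiv.swap q k)
      ?_ ?_ ?_ ?_ ?_
    · intro σ hσ
      rw [Finset.mem_filter] at hσ ⊢
      exact ⟨Finset.mem_univ _, hσ.2.1.comp (Equiv.injective _), fun k' => hσ.2.2 _⟩
    · intro σ hσ
      rw [Finset.mem_filter] at hσ ⊢
      exact ⟨Finset.mem_univ _, hσ.2.1.comp (Equiv.injective _), fun k' => hσ.2.2 _⟩
    · intro σ _; funext p; simp [Function.comp, Equiv.swap_apply_self]
    · intro σ _; funext p; simp [Function.comp, Equiv.swap_apply_self]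
    · intro σ _
      show _ = s i ((σ ∘ Equiv.swap q k) q) * xt (QkSet (σ ∘ Equiv.swap q k) k) i
        ((σ ∘ Equiv.swap q k) q)
      rw [QkSet_swap σ q k hq]
      simp [Function.comp, Equiv.swap_apply_left]
  have hcard : (Finset.univ.filter fun p : Fin d => p ≤ k).card = (k : ℕ) + 1 := by
    have : (Finset.univ.filter fun p : Fin d => p ≤ k) = Finset.Iic k := by
      ext p; simp
    rw [this, Fin.card_Iic]
  calc ((k : ℕ) + 1 : ℝ) * ∑ σ ∈ S, s i (σ k) * xt (QkSet σ k) i (σ k)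
      = ∑ q ∈ Finset.univ.filter (fun p : Fin d => p ≤ k),
          ∑ σ ∈ S, s i (σ q) * xt (QkSet σ k) i (σ q) := by
        rw [← Finset.sum_congr rfl hswap, Finset.sum_const, hcard, nsmul_eq_mul]
        push_cast
        ring
    _ = ∑ σ ∈ S, ∑ q ∈ Finset.univ.filter (fun p : Fin d => p ≤ k),
          s i (σ q) * xt (QkSet σ k) i (σ q) := Finset.sum_comm
    _ ≤ ∑ σ ∈ S, C i := by
        refine Finset.sum_le_sum ?_
        intro σ hσ
        rw [hSdef, Finset.mem_filter] at hσ
        have hinj := hσ.2.1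
        have himg : ∑ q ∈ Finset.univ.filter (fun p : Fin d => p ≤ k),
            s i (σ q) * xt (QkSet σ k) i (σ q)
            = ∑ j ∈ QkSet σ k, s i j * xt (QkSet σ k) i j := by
          rw [QkSet, Finset.sum_image (fun a _ b _ h => hinj h)]
        rw [himg]
        refine le_trans (Finset.sum_le_sum_of_subset_of_nonneg (Finset.subset_univ _) ?_)
          (hxcap _ i)
        intro j _ _
        exact mul_nonneg (hs i j).le (hx0 _ i j)
    _ = (S.card : ℝ) * C i := by rw [Finset.sum_const, nsmul_eq_mul]

def prb {m n d : ℕ} (xt : Finset (Fin n) → Fin m → Fin n → ℝ) (t : ℕ)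
    (σ : Fin d → Fin n) (k : Fin d) (r : Option (Fin m)) : ℝ :=
  if (k : ℕ) < t then (if r = none then (1 : ℝ) else 0)
  else r.elim (1 - ∑ i' : Fin m, xt (QkSet σ k) i' (σ k)) (fun i' => xt (QkSet σ k) i' (σ k))

lemma prb_sum {m n d : ℕ} (xt : Finset (Fin n) → Fin m → Fin n → ℝ) (t : ℕ)
    (σ : Fin d → Fin n) (k : Fin d) :
    ∑ r : Option (Fin m), prb xt t σ k r = 1 := by
  by_cases h : (k : ℕ) < t <;>
    simp [prb, h, Fintype.sum_option]

lemma prb_nonneg {m n d : ℕ}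
    (xt : Finset (Fin n) → Fin m → Fin n → ℝ)
    (hx0 : ∀ Q i j, 0 ≤ xt Q i j) (hxle1 : ∀ Q j, ∑ i', xt Q i' j ≤ 1)
    (t : ℕ) (σ : Fin d → Fin n) (k : Fin d) (r : Option (Fin m)) :
    0 ≤ prb xt t σ k r := by
  unfold prb
  by_cases h : (k : ℕ) < t
  · simp only [h, if_true]
    split <;> norm_num
  · simp only [h, if_false]
    cases r with
    | none => simpa using hxle1 (QkSet σ k) (σ k)
    | some i' => exact hx0 _ _ _

end Aux


/-- Fix `t ∈ {0,…,n}`, a round `ℓ ∈ {t+1,…,n}`, a bin `i`, and a set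
`Q ⊆ [n]` with `|Q| = ℓ−1`. Let `σ` be a uniformly random ordering of `Q` (a uniformly
random injection `Fin (ℓ−1) → [n]` with range `Q`; there are `(ℓ−1)!` of them), and,
conditionally on `σ`, let the bin choices `R_k` for the rounds `k = t+1,…,ℓ−1`
(0-indexed: `t ≤ k < ℓ−1`) be independent with `P(R_k = i') = x̃_{i',σ(k)}(Q_k)`, where
`Q_k` is the set of the first `k` revealed items, and
`P(R_k = none) = 1 − Σ_{i'} x̃_{i',σ(k)}(Q_k)`. Then the probability that the tentative
assignments of rounds `t+1,…,ℓ−1` exceed the capacity of bin `i` is at most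
`Σ_{k=t+1}^{ℓ−1} 1/k`. The probability is written out as an explicit finite sum over
all orderings and all choice vectors (choices in sample rounds are forced to `none`). -/
theorem gap_overflow_probability_bound
    (m n : ℕ) (C : Fin m → ℝ) (hC : ∀ i, 0 < C i)
    (s v : Fin m → Fin n → ℝ)
    (hs : ∀ i j, 0 < s i j ∧ s i j ≤ C i) (hv : ∀ i j, 0 < v i j)
    (xt : Finset (Fin n) → Fin m → Fin n → ℝ)
    (hxt : ∀ Q : Finset (Fin n), gapFeasibleOn m n C s (xt Q) Q ∧
      (∀ y, gapFeasibleOn m n C s y Q → gapVal m n v y ≤ gapVal m n v (xt Q)))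
    (t ℓ : ℕ) (ht : t ≤ n) (hℓ1 : t + 1 ≤ ℓ) (hℓ2 : ℓ ≤ n)
    (i : Fin m) (Q : Finset (Fin n)) (hQ : Q.card = ℓ - 1) :
    ∑ σ ∈ Finset.univ.filter
        (fun σ : Fin (ℓ - 1) → Fin n => Function.Injective σ ∧ ∀ k, σ k ∈ Q),
      ∑ R : Fin (ℓ - 1) → Option (Fin m),
        (((ℓ - 1).factorial : ℝ))⁻¹ *
        (∏ k : Fin (ℓ - 1),
          if (k : ℕ) < t then (if R k = none then (1 : ℝ) else 0)
          else
            (R k).elim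
              (1 - ∑ i' : Fin m,
                xt ((Finset.univ.filter (fun p : Fin (ℓ - 1) => p ≤ k)).image σ) i' (σ k))
              (fun i' =>
                xt ((Finset.univ.filter (fun p : Fin (ℓ - 1) => p ≤ k)).image σ) i' (σ k))) *
        (if C i < ∑ k ∈ Finset.univ.filter (fun k : Fin (ℓ - 1) => t ≤ (k : ℕ)),
            s i (σ k) * (if R k = some i then (1 : ℝ) else 0)
          then 1 else 0)
      ≤ ∑ k ∈ Finset.Icc (t + 1) (ℓ - 1), (1 : ℝ) / (k : ℝ) := by
  classical
  have hx0 : ∀ Q' i' j', 0 ≤ xt Q' i' j' := fun Q' => (hxt Q').1.1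
  have hxcap : ∀ Q' i', ∑ j, s i' j * xt Q' i' j ≤ C i' := fun Q' => (hxt Q').1.2.1
  have hxle1 : ∀ Q' j', ∑ i', xt Q' i' j' ≤ 1 := fun Q' => (hxt Q').1.2.2.1
  set d := ℓ - 1 with hdd
  set S := Finset.univ.filter
    (fun σ : Fin d → Fin n => Function.Injective σ ∧ ∀ k, σ k ∈ Q) with hS
  set K := Finset.univ.filter (fun k : Fin d => t ≤ (k : ℕ)) with hK
  have hfacpos : (0 : ℝ) < (d.factorial : ℝ) := by exact_mod_cast d.factorial_pos
  have hScard : ((S.card : ℝ)) ≤ (d.factorial : ℝ) := by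
    exact_mod_cast card_orderings_le Q hQ
  have hwnn : ∀ (σ : Fin d → Fin n) (R : Fin d → Option (Fin m)),
      0 ≤ ∏ k, prb xt t σ k (R k) :=
    fun σ R => Finset.prod_nonneg fun k _ => prb_nonneg xt hx0 hxle1 t σ k (R k)
  have hloadnn : ∀ (σ : Fin d → Fin n) (R : Fin d → Option (Fin m)),
      0 ≤ ∑ k ∈ K, s i (σ k) * (if R k = some i then (1 : ℝ) else 0) := by
    intro σ R
    exact Finset.sum_nonneg fun k _ =>
      mul_nonneg (hs i (σ k)).1.le (by split <;> norm_num)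
  -- Step 1: bound the indicator by load / C i  (Markov)
  have step1 : (∑ σ ∈ S, ∑ R : Fin d → Option (Fin m),
      (d.factorial : ℝ)⁻¹ * (∏ k, prb xt t σ k (R k)) *
      (if C i < ∑ k ∈ K, s i (σ k) * (if R k = some i then (1 : ℝ) else 0)
        then (1 : ℝ) else 0))
      ≤ ∑ σ ∈ S, ∑ R : Fin d → Option (Fin m),
        (d.factorial : ℝ)⁻¹ * (∏ k, prb xt t σ k (R k)) *
        ((C i)⁻¹ * ∑ k ∈ K, s i (σ k) * (if R k = some i then (1 : ℝ) else 0)) := by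
    refine Finset.sum_le_sum fun σ _ => Finset.sum_le_sum fun R _ => ?_
    refine mul_le_mul_of_nonneg_left ?_
      (mul_nonneg (inv_nonneg.mpr hfacpos.le) (hwnn σ R))
    split_ifs with h
    · rw [inv_mul_eq_div, le_div_iff₀ (hC i), one_mul]
      exact h.le
    · exact mul_nonneg (inv_nonneg.mpr (hC i).le) (hloadnn σ R)
  refine le_trans step1 ?_
  -- Step 2: compute the inner expectation
  have inner : ∀ σ : Fin d → Fin n,
      ∑ R : Fin d → Option (Fin m), (d.factorial : ℝ)⁻¹ * (∏ k, prb xt t σ k (R k)) *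
        ((C i)⁻¹ * ∑ k ∈ K, s i (σ k) * (if R k = some i then (1 : ℝ) else 0))
      = (d.factorial : ℝ)⁻¹ * (C i)⁻¹ *
          ∑ k ∈ K, s i (σ k) * xt (QkSet σ k) i (σ k) := by
    intro σ
    have h1 : ∑ R : Fin d → Option (Fin m), (d.factorial : ℝ)⁻¹ * (∏ k, prb xt t σ k (R k)) *
        ((C i)⁻¹ * ∑ k ∈ K, s i (σ k) * (if R k = some i then (1 : ℝ) else 0))
        = (d.factorial : ℝ)⁻¹ * (C i)⁻¹ * ∑ R : Fin d → Option (Fin m),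
            ∑ k ∈ K, (∏ k', prb xt t σ k' (R k')) *
              (s i (σ k) * (if R k = some i then (1 : ℝ) else 0)) := by
      rw [Finset.mul_sum]
      refine Finset.sum_congr rfl fun R _ => ?_
      calc (d.factorial : ℝ)⁻¹ * (∏ k, prb xt t σ k (R k)) *
            ((C i)⁻¹ * ∑ k ∈ K, s i (σ k) * (if R k = some i then (1 : ℝ) else 0))
          = (d.factorial : ℝ)⁻¹ * (C i)⁻¹ * ((∏ k', prb xt t σ k' (R k')) *
              ∑ k ∈ K, s i (σ k) * (if R k = some i then (1 : ℝ) else 0)) := by ring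
        _ = (d.factorial : ℝ)⁻¹ * (C i)⁻¹ * ∑ k ∈ K, (∏ k', prb xt t σ k' (R k')) *
              (s i (σ k) * (if R k = some i then (1 : ℝ) else 0)) := by
            rw [Finset.mul_sum]
    rw [h1]
    congr 1
    rw [Finset.sum_comm]
    refine Finset.sum_congr rfl fun k hk => ?_
    have hkt : ¬ ((k : ℕ) < t) := by
      rw [hK, Finset.mem_filter] at hk
      omega
    refine (marginal_sum (prb xt t σ) (prb_sum xt t σ) k
      (fun r => s i (σ k) * (if r = some i then (1 : ℝ) else 0))).trans ?_
    rw [Fintype.sum_option]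
    simp only [prb, hkt, if_false, Option.elim]
    simp [mul_ite, mul_zero, mul_one, Finset.sum_ite_eq', mul_comm]
  -- Step 3: apply the key bound and sum up
  calc ∑ σ ∈ S, ∑ R : Fin d → Option (Fin m),
        (d.factorial : ℝ)⁻¹ * (∏ k, prb xt t σ k (R k)) *
        ((C i)⁻¹ * ∑ k ∈ K, s i (σ k) * (if R k = some i then (1 : ℝ) else 0))
      = (d.factorial : ℝ)⁻¹ * (C i)⁻¹ *
          ∑ k ∈ K, ∑ σ ∈ S, s i (σ k) * xt (QkSet σ k) i (σ k) := by
        rw [Finset.sum_congr rfl fun σ _ => inner σ, ← Finset.mul_sum, Finset.sum_comm]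
    _ ≤ (d.factorial : ℝ)⁻¹ * (C i)⁻¹ *
          ∑ k ∈ K, (S.card : ℝ) * C i / ((k : ℕ) + 1) := by
        refine mul_le_mul_of_nonneg_left (Finset.sum_le_sum fun k _ => ?_)
          (mul_nonneg (inv_nonneg.mpr hfacpos.le) (inv_nonneg.mpr (hC i).le))
        have hkb := key_bound C s xt hx0 hxcap (fun i' j' => (hs i' j').1) Q i k
        rw [le_div_iff₀ (by positivity : (0:ℝ) < (k : ℕ) + 1)]
        calc (∑ σ ∈ S, s i (σ k) * xt (QkSet σ k) i (σ k)) * ((k : ℕ) + 1)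
            = ((k : ℕ) + 1 : ℝ) * ∑ σ ∈ S, s i (σ k) * xt (QkSet σ k) i (σ k) := by ring
          _ ≤ (S.card : ℝ) * C i := hkb
    _ = ∑ k ∈ K, (S.card : ℝ) / (d.factorial : ℝ) * (1 / ((k : ℕ) + 1)) := by
        rw [Finset.mul_sum]
        refine Finset.sum_congr rfl fun k _ => ?_
        have hk1 : ((k : ℕ) + 1 : ℝ) ≠ 0 := by positivity
        have hCne : C i ≠ 0 := (hC i).ne'
        have hfne : (d.factorial : ℝ) ≠ 0 := hfacpos.ne'
        field_simp
    _ ≤ ∑ k ∈ K, 1 / ((k : ℕ) + 1 : ℝ) := by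
        refine Finset.sum_le_sum fun k _ => ?_
        have h1 : (S.card : ℝ) / (d.factorial : ℝ) ≤ 1 :=
          (div_le_one hfacpos).mpr hScard
        have h2 : (0:ℝ) ≤ 1 / ((k : ℕ) + 1) := by positivity
        exact mul_le_of_le_one_left h2 h1
    _ = ∑ j ∈ Finset.Icc (t + 1) d, (1 : ℝ) / (j : ℝ) := by
        refine Finset.sum_bij (fun k _ => (k : ℕ) + 1) ?_ ?_ ?_ ?_
        · intro k hk
          rw [hK, Finset.mem_filter] at hk
          show (k : ℕ) + 1 ∈ Finset.Icc (t + 1) d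
          rw [Finset.mem_Icc]
          have := k.isLt
          omega
        · intro a _ b _ hab
          simp only [add_left_inj] at hab
          exact Fin.ext hab
        · intro b hb
          rw [Finset.mem_Icc] at hb
          have hb1 : b - 1 < d := by omega
          refine ⟨⟨b - 1, hb1⟩, ?_, by simp; omega⟩
          rw [hK, Finset.mem_filter]
          exact ⟨Finset.mem_univ _, by simp; omega⟩
        · intro k _
          show (1 : ℝ) / ((k : ℕ) + 1) = (1 : ℝ) / (((k : ℕ) + 1 : ℕ) : ℝ)
          push_cast
          ring
end

section
/- For every permutation π of [n], every sample size t ∈ {0,…,n}, and every fixed vector of bin choices R_{t+1},…,R_n ∈ {0,1,…,m}, the outputs x of InfeasibleGAP, y of FeasibleGAP, and z of ImitativeGAP satisfy v(y) + v(z) ≥ v(x). Moreover, y and z each satisfy all GAP feasibility constraints: Σ_j s_{i,j} y_{i,j} ≤ C_i and Σ_j s_{i,j} z_{i,j} ≤ C_i for all i ∈ [m], and each item is assigned to at most one bin. -/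
/-- `Qset π ℓ` is the set of items revealed in the first `ℓ` rounds
(rounds are 0-indexed `0,…,n−1`). -/
def QsetG (n : ℕ) (π : Equiv.Perm (Fin n)) (ℓ : ℕ) : Finset (Fin n) :=
  (Finset.univ.filter (fun k : Fin n => (k : ℕ) < ℓ)).image π

/-- Algorithm `InfeasibleGAP`: `infAlg … ℓ` is the assignment after the first `ℓ`
rounds. Nothing is assigned during the sample rounds (0-indexed rounds `< t`); in a
later round `ℓ`, if the bin choice is `R ℓ = some i` and the total size assigned to
bin `i` so far is at most `C i`, item `π ℓ` is assigned to bin `i` (so each bin's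
capacity may be exceeded by at most one item). -/
noncomputable def infAlg (m n : ℕ) (C : Fin m → ℝ) (s : Fin m → Fin n → ℝ)
    (t : ℕ) (π : Equiv.Perm (Fin n)) (R : Fin n → Option (Fin m)) :
    ℕ → Fin m → Fin n → ℝ
  | 0 => fun _ _ => 0
  | (ℓ + 1) =>
      let X := infAlg m n C s t π R ℓ
      if h : t ≤ ℓ ∧ ℓ < n then
        (R ⟨ℓ, h.2⟩).elim X (fun i =>
          if ∑ j, s i j * X i j ≤ C i then
            (fun i' j' => if i' = i ∧ j' = π ⟨ℓ, h.2⟩ then 1 else X i' j')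
          else X)
      else X

/-- Algorithms `FeasibleGAP` and `ImitativeGAP`, run together: `fzAlg … ℓ = (y, z)`
after the first `ℓ` rounds. `FeasibleGAP` assigns item `π ℓ` to bin `i = R ℓ` only if
the capacity is respected *after* the assignment; `ImitativeGAP` maintains the same
imitative assignment `y` and assigns to each bin `i` only the first item whose
tentative assignment to `i` would violate the capacity in `y`. -/
noncomputable def fzAlg (m n : ℕ) (C : Fin m → ℝ) (s : Fin m → Fin n → ℝ)
    (t : ℕ) (π : Equiv.Perm (Fin n)) (R : Fin n → Option (Fin m)) :
    ℕ → ((Fin m → Fin n → ℝ) × (Fin m → Fin n → ℝ))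
  | 0 => (fun _ _ => 0, fun _ _ => 0)
  | (ℓ + 1) =>
      let YZ := fzAlg m n C s t π R ℓ
      if h : t ≤ ℓ ∧ ℓ < n then
        (R ⟨ℓ, h.2⟩).elim YZ (fun i =>
          if s i (π ⟨ℓ, h.2⟩) + ∑ j, s i j * YZ.1 i j ≤ C i then
            ((fun i' j' => if i' = i ∧ j' = π ⟨ℓ, h.2⟩ then 1 else YZ.1 i' j'), YZ.2)
          else if ∀ k ∈ Finset.univ.filter (fun k : Fin n => (k : ℕ) < ℓ),
              YZ.2 i (π k) = 0 then
            (YZ.1, (fun i' j' => if i' = i ∧ j' = π ⟨ℓ, h.2⟩ then 1 else YZ.2 i' j'))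
          else YZ)
      else YZ

/-! The three runs see the same items in the same order, and after every round each bin `i`
is in one of two states: either `x` and `y` agree on bin `i` and `z` has nothing there, or
`x` already overflows `C i` (so `InfeasibleGAP` is done with bin `i`) and `x ≤ y + z` on bin `i`.
Indeed, `InfeasibleGAP` only assigns to a bin in the first state; then `FeasibleGAP` assigns the
same item, or, if it does not fit, the empty bin of `z` takes it and the bin overflows in `x`.
Feasibility of `y` is built in, and `z` holds at most one item, of size at most `C i`, per bin. -/

/-- The update performed by `infAlg` and `fzAlg`, written as there. -/
def assign {m n : ℕ} (A : Fin m → Fin n → ℝ) (i : Fin m) (a : Fin n) : Fin m → Fin n → ℝ :=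
  fun i' j' => if i' = i ∧ j' = a then 1 else A i' j'

section Assign

variable {m n : ℕ} {A : Fin m → Fin n → ℝ} {i : Fin m} {a : Fin n}

lemma assign_apply_of_ne {i' : Fin m} (h : i' ≠ i) : assign A i a i' = A i' := by
  funext j
  simp [assign, h]

lemma assign_apply_self (ha : A i a = 0) : assign A i a i = A i + Pi.single a 1 := by
  funext j
  by_cases hj : j = a <;> simp [assign, hj, ha]

lemma sum_mul_add_single (w x : Fin n → ℝ) :
    ∑ j, w j * (x + Pi.single a 1 : Fin n → ℝ) j = ∑ j, w j * x j + w a := by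
  simp [mul_add, Finset.sum_add_distrib, Pi.single_apply]

lemma le_add_single (x : Fin n → ℝ) : x ≤ x + Pi.single a 1 :=
  le_add_of_nonneg_right (Pi.single_nonneg.mpr zero_le_one)

end Assign

section Feasible

variable {m n : ℕ} {C : Fin m → ℝ} {s A : Fin m → Fin n → ℝ} {Q Q' : Finset (Fin n)}

lemma gapFeasibleOn_zero (hC : ∀ i, 0 ≤ C i) : gapFeasibleOn m n C s 0 Q :=
  ⟨fun _ _ => le_rfl, by simpa using hC, by simp, fun _ _ _ => rfl⟩

lemma gapFeasibleOn.mono (h : gapFeasibleOn m n C s A Q) (hQ : Q ⊆ Q') :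
    gapFeasibleOn m n C s A Q' :=
  ⟨h.1, h.2.1, h.2.2.1, fun i j hj => h.2.2.2 i j (fun hjQ => hj (hQ hjQ))⟩

lemma gapFeasibleOn.apply_eq_zero (h : gapFeasibleOn m n C s A Q) {a : Fin n} (ha : a ∉ Q)
    (i : Fin m) : A i a = 0 :=
  h.2.2.2 i a ha

lemma gapFeasibleOn.assign (h : gapFeasibleOn m n C s A Q) {i : Fin m} {a : Fin n}
    (ha : a ∉ Q) (hfit : s i a + ∑ j, s i j * A i j ≤ C i) :
    gapFeasibleOn m n C s (assign A i a) (insert a Q) := by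
  obtain ⟨hnonneg, hcap, hcol, hsupp⟩ := h
  have hfresh : ∀ i', A i' a = 0 := fun i' => hsupp i' a ha
  refine ⟨fun i' j => ?_, fun i' => ?_, fun j => ?_, fun i' j hj => ?_⟩
  · unfold _root_.assign
    split_ifs
    exacts [zero_le_one, hnonneg i' j]
  · rcases eq_or_ne i' i with rfl | hi'
    · rw [assign_apply_self (hfresh i'), sum_mul_add_single]
      linarith
    · rw [assign_apply_of_ne hi']
      exact hcap i'
  · rcases eq_or_ne j a with rfl | hja
    · simp [_root_.assign, hfresh]
    · simpa [_root_.assign, hja] using hcol j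
  · rw [Finset.mem_insert, not_or] at hj
    simp [_root_.assign, hj.1, hsupp i' j hj.2]

end Feasible

def CoveredBin {n : ℕ} (c : ℝ) (w x y z : Fin n → ℝ) : Prop :=
  (x = y ∧ z = 0) ∨ (x ≤ y + z ∧ c < ∑ j, w j * x j)

namespace CoveredBin

variable {n : ℕ} {c : ℝ} {w x y z : Fin n → ℝ}

lemma le_add (h : CoveredBin c w x y z) : x ≤ y + z := by
  rcases h with ⟨rfl, rfl⟩ | ⟨hle, _⟩
  · simp
  · exact hle

lemma eq_of_load_le (h : CoveredBin c w x y z) (hx : ∑ j, w j * x j ≤ c) : x = y ∧ z = 0 :=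
  h.resolve_right fun ⟨_, hlt⟩ => hlt.not_ge hx

lemma le_add_of_load_gt (h : CoveredBin c w x y z) (hy : ∑ j, w j * y j ≤ c)
    (hx : ¬ ∑ j, w j * x j ≤ c) : x ≤ y + z := by
  rcases h with ⟨rfl, _⟩ | ⟨hle, _⟩
  · exact absurd hy hx
  · exact hle

end CoveredBin

/-- `Q` is the set of items seen so far. -/
structure GapInvariant {m n : ℕ} (C : Fin m → ℝ) (s : Fin m → Fin n → ℝ) (Q : Finset (Fin n))
    (X Y Z : Fin m → Fin n → ℝ) : Prop where
  feasible_y : gapFeasibleOn m n C s Y Q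
  feasible_z : gapFeasibleOn m n C s Z Q
  covered : ∀ i, CoveredBin (C i) (s i) (X i) (Y i) (Z i)

namespace GapInvariant

variable {m n : ℕ} {C : Fin m → ℝ} {s X Y Z : Fin m → Fin n → ℝ} {Q : Finset (Fin n)}
  {i : Fin m} {a : Fin n}

lemma zero (hC : ∀ i, 0 ≤ C i) : GapInvariant C s Q 0 0 0 :=
  ⟨gapFeasibleOn_zero hC, gapFeasibleOn_zero hC, fun _ => Or.inl ⟨rfl, rfl⟩⟩

lemma mono (H : GapInvariant C s Q X Y Z) {Q' : Finset (Fin n)} (hQ : Q ⊆ Q') :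
    GapInvariant C s Q' X Y Z :=
  ⟨H.feasible_y.mono hQ, H.feasible_z.mono hQ, H.covered⟩

/-- A round only touches bin `i`, so the invariant reduces to the state of that bin. -/
lemma of_bin (H : GapInvariant C s Q X Y Z) {Q' : Finset (Fin n)} {X' Y' Z' : Fin m → Fin n → ℝ}
    (hY : gapFeasibleOn m n C s Y' Q') (hZ : gapFeasibleOn m n C s Z' Q')
    (hX' : ∀ i' ≠ i, X' i' = X i') (hY' : ∀ i' ≠ i, Y' i' = Y i') (hZ' : ∀ i' ≠ i, Z' i' = Z i')
    (hi : CoveredBin (C i) (s i) (X' i) (Y' i) (Z' i)) :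
    GapInvariant C s Q' X' Y' Z' := by
  refine ⟨hY, hZ, fun i' => ?_⟩
  rcases eq_or_ne i' i with rfl | hi'
  · exact hi
  · rw [hX' i' hi', hY' i' hi', hZ' i' hi']
    exact H.covered i'

lemma assign_x_y (H : GapInvariant C s Q X Y Z) (ha : a ∉ Q)
    (hX : ∑ j, s i j * X i j ≤ C i) (hfit : s i a + ∑ j, s i j * Y i j ≤ C i) :
    GapInvariant C s (insert a Q) (assign X i a) (assign Y i a) Z := by
  obtain ⟨hxy, hz⟩ := (H.covered i).eq_of_load_le hX
  have hYa := H.feasible_y.apply_eq_zero ha i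
  refine H.of_bin (H.feasible_y.assign ha hfit) (H.feasible_z.mono (Finset.subset_insert a Q))
    (fun _ => assign_apply_of_ne) (fun _ => assign_apply_of_ne) (fun _ _ => rfl) (Or.inl ⟨?_, hz⟩)
  rw [assign_apply_self (hxy ▸ hYa), assign_apply_self hYa, hxy]

lemma assign_x_z (H : GapInvariant C s Q X Y Z) (hs : ∀ i j, s i j ≤ C i) (ha : a ∉ Q)
    (hX : ∑ j, s i j * X i j ≤ C i) (hfit : ¬ s i a + ∑ j, s i j * Y i j ≤ C i) :
    GapInvariant C s (insert a Q) (assign X i a) Y (assign Z i a) := by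
  obtain ⟨hxy, hz⟩ := (H.covered i).eq_of_load_le hX
  have hYa := H.feasible_y.apply_eq_zero ha i
  have hZfit : s i a + ∑ j, s i j * Z i j ≤ C i := by simpa [hz] using hs i a
  refine H.of_bin (H.feasible_y.mono (Finset.subset_insert a Q)) (H.feasible_z.assign ha hZfit)
    (fun _ => assign_apply_of_ne) (fun _ _ => rfl) (fun _ => assign_apply_of_ne) (Or.inr ⟨?_, ?_⟩)
  · rw [assign_apply_self (hxy ▸ hYa), assign_apply_self (H.feasible_z.apply_eq_zero ha i), hxy,
      hz, zero_add]
  · rw [assign_apply_self (hxy ▸ hYa), sum_mul_add_single, hxy]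
    linarith

lemma assign_y (H : GapInvariant C s Q X Y Z) (ha : a ∉ Q)
    (hX : ¬ ∑ j, s i j * X i j ≤ C i) (hfit : s i a + ∑ j, s i j * Y i j ≤ C i) :
    GapInvariant C s (insert a Q) X (assign Y i a) Z := by
  have hle := (H.covered i).le_add_of_load_gt (H.feasible_y.2.1 i) hX
  refine H.of_bin (H.feasible_y.assign ha hfit) (H.feasible_z.mono (Finset.subset_insert a Q))
    (fun _ _ => rfl) (fun _ => assign_apply_of_ne) (fun _ _ => rfl) (Or.inr ⟨?_, not_le.mp hX⟩)
  rw [assign_apply_self (H.feasible_y.apply_eq_zero ha i)]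
  exact hle.trans (add_le_add_left (le_add_single _) _)

lemma assign_z (H : GapInvariant C s Q X Y Z) (hs : ∀ i j, s i j ≤ C i) (ha : a ∉ Q)
    (hX : ¬ ∑ j, s i j * X i j ≤ C i) (hZ : ∀ j ∈ Q, Z i j = 0) :
    GapInvariant C s (insert a Q) X Y (assign Z i a) := by
  have hle := (H.covered i).le_add_of_load_gt (H.feasible_y.2.1 i) hX
  have hz : Z i = 0 := funext fun j =>
    if hj : j ∈ Q then hZ j hj else H.feasible_z.apply_eq_zero hj i
  have hZfit : s i a + ∑ j, s i j * Z i j ≤ C i := by simpa [hz] using hs i a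
  refine H.of_bin (H.feasible_y.mono (Finset.subset_insert a Q)) (H.feasible_z.assign ha hZfit)
    (fun _ _ => rfl) (fun _ _ => rfl) (fun _ => assign_apply_of_ne) (Or.inr ⟨?_, not_le.mp hX⟩)
  rw [assign_apply_self (H.feasible_z.apply_eq_zero ha i)]
  exact hle.trans (add_le_add_right (le_add_single _) _)

/-- One active round with bin choice `i` and new item `a`, in the form produced by unfolding
`infAlg` and `fzAlg`; `g` is the guard of `ImitativeGAP`. -/
lemma round (H : GapInvariant C s Q X Y Z) (hs : ∀ i j, s i j ≤ C i) (ha : a ∉ Q) (i : Fin m)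
    {g : Prop} [Decidable g] (hg : g ↔ ∀ j ∈ Q, Z i j = 0) :
    GapInvariant C s (insert a Q)
      (if ∑ j, s i j * X i j ≤ C i then assign X i a else X)
      (if s i a + ∑ j, s i j * Y i j ≤ C i then (assign Y i a, Z)
        else if g then (Y, assign Z i a) else (Y, Z)).1
      (if s i a + ∑ j, s i j * Y i j ≤ C i then (assign Y i a, Z)
        else if g then (Y, assign Z i a) else (Y, Z)).2 := by
  by_cases hX : ∑ j, s i j * X i j ≤ C i <;> by_cases hfit : s i a + ∑ j, s i j * Y i j ≤ C i
  · simpa only [hX, hfit, if_true] using H.assign_x_y ha hX hfit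
  · have hg' : g := hg.mpr fun j _ => by rw [((H.covered i).eq_of_load_le hX).2]; rfl
    simpa only [hX, hfit, hg', if_true, if_false] using H.assign_x_z hs ha hX hfit
  · simpa only [hX, hfit, if_true, if_false] using H.assign_y ha hX hfit
  · by_cases hg' : g
    · simpa only [hX, hfit, hg', if_false, if_true] using H.assign_z hs ha hX (hg.mp hg')
    · simpa only [hX, hfit, hg', if_false] using H.mono (Finset.subset_insert a Q)

end GapInvariant

section Rounds

variable {n : ℕ} (π : Equiv.Perm (Fin n))

lemma QsetG_succ {ℓ : ℕ} (hℓ : ℓ < n) : QsetG n π (ℓ + 1) = insert (π ⟨ℓ, hℓ⟩) (QsetG n π ℓ) := by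
  ext j
  simp only [QsetG, Finset.mem_image, Finset.mem_filter, Finset.mem_univ, true_and,
    Finset.mem_insert]
  constructor
  · rintro ⟨k, hk, rfl⟩
    rcases Nat.lt_succ_iff_lt_or_eq.mp hk with hk | hk
    · exact Or.inr ⟨k, hk, rfl⟩
    · exact Or.inl (congrArg π (Fin.ext hk))
  · rintro (rfl | ⟨k, hk, rfl⟩)
    exacts [⟨_, Nat.lt_succ_self ℓ, rfl⟩, ⟨k, Nat.lt_succ_of_lt hk, rfl⟩]

lemma apply_notMem_QsetG {ℓ : ℕ} (hℓ : ℓ < n) : π ⟨ℓ, hℓ⟩ ∉ QsetG n π ℓ := by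
  simp [QsetG]

lemma QsetG_subset_succ (ℓ : ℕ) : QsetG n π ℓ ⊆ QsetG n π (ℓ + 1) :=
  Finset.image_subset_image fun k hk => by
    simp only [Finset.mem_filter, Finset.mem_univ, true_and] at hk ⊢
    omega

end Rounds

theorem gapInvariant_infAlg_fzAlg {m n : ℕ} {C : Fin m → ℝ} (hC : ∀ i, 0 ≤ C i)
    {s : Fin m → Fin n → ℝ} (hs : ∀ i j, s i j ≤ C i) (t : ℕ) (π : Equiv.Perm (Fin n))
    (R : Fin n → Option (Fin m)) (ℓ : ℕ) :
    GapInvariant C s (QsetG n π ℓ) (infAlg m n C s t π R ℓ)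
      (fzAlg m n C s t π R ℓ).1 (fzAlg m n C s t π R ℓ).2 := by
  induction ℓ with
  | zero => exact GapInvariant.zero hC
  | succ ℓ ih =>
    simp only [infAlg, fzAlg]
    by_cases h : t ≤ ℓ ∧ ℓ < n
    · simp only [dif_pos h]
      cases R ⟨ℓ, h.2⟩ with
      | none => exact ih.mono (QsetG_subset_succ π ℓ)
      | some i =>
        rw [QsetG_succ π h.2]
        exact ih.round hs (apply_notMem_QsetG π h.2) i
          (by rw [QsetG, Finset.forall_mem_image])
    · simp only [dif_neg h]
      exact ih.mono (QsetG_subset_succ π ℓ)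

lemma gapVal_le_add {m n : ℕ} {v X Y Z : Fin m → Fin n → ℝ} (hv : ∀ i j, 0 ≤ v i j)
    (h : X ≤ Y + Z) : gapVal m n v X ≤ gapVal m n v Y + gapVal m n v Z := by
  simp only [gapVal, ← Finset.sum_add_distrib, ← mul_add]
  gcongr with i _ j _
  · exact hv i j
  · exact h i j

theorem gap_feasible_imitative_cover_infeasible_general
    (m n : ℕ) (C : Fin m → ℝ) (hC : ∀ i, 0 < C i)
    (s v : Fin m → Fin n → ℝ)
    (hs : ∀ i j, 0 < s i j ∧ s i j ≤ C i) (hv : ∀ i j, 0 < v i j)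
    (π : Equiv.Perm (Fin n)) (t : ℕ)
    (R : Fin n → Option (Fin m)) :
    gapVal m n v ((fzAlg m n C s t π R n).1) + gapVal m n v ((fzAlg m n C s t π R n).2)
        ≥ gapVal m n v (infAlg m n C s t π R n) ∧
    (∀ i, ∑ j, s i j * (fzAlg m n C s t π R n).1 i j ≤ C i) ∧
    (∀ j, ∑ i, (fzAlg m n C s t π R n).1 i j ≤ 1) ∧
    (∀ i, ∑ j, s i j * (fzAlg m n C s t π R n).2 i j ≤ C i) ∧
    (∀ j, ∑ i, (fzAlg m n C s t π R n).2 i j ≤ 1) := by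
  obtain ⟨⟨-, hcap_y, hcol_y, -⟩, ⟨-, hcap_z, hcol_z, -⟩, hcovered⟩ :=
    gapInvariant_infAlg_fzAlg (fun i => (hC i).le) (fun i j => (hs i j).2) t π R n
  exact ⟨gapVal_le_add (fun i j => (hv i j).le) fun i => (hcovered i).le_add,
    hcap_y, hcol_y, hcap_z, hcol_z⟩

/-- For every permutation `π`, sample size `t ∈ {0,…,n}`, and fixed
bin choices `R`, the outputs `x` of `InfeasibleGAP`, `y` of `FeasibleGAP` and `z` of
`ImitativeGAP` satisfy `v(y) + v(z) ≥ v(x)`; moreover `y` and `z` each satisfy all GAP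
feasibility constraints (capacities and each item in at most one bin). -/
theorem gap_feasible_imitative_cover_infeasible
    (m n : ℕ) (C : Fin m → ℝ) (hC : ∀ i, 0 < C i)
    (s v : Fin m → Fin n → ℝ)
    (hs : ∀ i j, 0 < s i j ∧ s i j ≤ C i) (hv : ∀ i j, 0 < v i j)
    (π : Equiv.Perm (Fin n)) (t : ℕ) (ht : t ≤ n)
    (R : Fin n → Option (Fin m)) :
    gapVal m n v ((fzAlg m n C s t π R n).1) + gapVal m n v ((fzAlg m n C s t π R n).2)
        ≥ gapVal m n v (infAlg m n C s t π R n) ∧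
    (∀ i, ∑ j, s i j * (fzAlg m n C s t π R n).1 i j ≤ C i) ∧
    (∀ j, ∑ i, (fzAlg m n C s t π R n).1 i j ≤ 1) ∧
    (∀ i, ∑ j, s i j * (fzAlg m n C s t π R n).2 i j ≤ C i) ∧
    (∀ j, ∑ i, (fzAlg m n C s t π R n).2 i j ≤ 1) :=
  gap_feasible_imitative_cover_infeasible_general m n C hC s v hs hv π t R
end
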